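/- Under the same hypotheses, the derivative I'(h) = √2 ∫_{x₋(h)}^{x₊(h)} dx/√(h − G(x)) satisfies: there exist constants c₁, c₂ > 0 and h₀ > 0 such that for all h ≥ h₀, c₁ h^{−1/2 + 1/(2n+2)} ≤ I'(h) ≤ c₂ h^{−1/2 + 1/(2n+2)}. -/

import Mathlib

/-!
Write `k = p + 1` with `p = 2n + 1`. Since `m ≤ a ≤ M`, for `0 ≤ x ≤ y` the increment `G y - G x`
lies between `m (y^k - x^k) / k` and `M (y^k - x^k) / k`, and `x ↦ G (-x)` is a primitive of the
same kind for `a ∘ neg`, so it suffices to integrate over `[0, x₊]`, where `k h / M ≤ x₊^k`.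
There `h - G x ≤ h` gives the lower bound `x₊ / √h`, while `h - G x ≥ (m / k) x₊^p (x₊ - x)`
bounds the integrand by a multiple of `x₊^(-p/2) (x₊ - x)^(-1/2)`, whose integral is of order
`x₊^((1 - p)/2) = (x₊^k)^(1/k - 1/2)`. Both bounds are therefore of order `h^(1/k - 1/2)`.
-/

open MeasureTheory intervalIntegral Set

lemma intervalIntegrable_sub_rpow_neg_half (a b : ℝ) :
    IntervalIntegrable (fun x => (b - x) ^ (-(1 / 2) : ℝ)) volume a b := by
  simpa using (intervalIntegrable_rpow' (by norm_num : (-1 : ℝ) < -(1 / 2))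
    (a := b - a) (b := 0)).comp_sub_left b

lemma integral_sub_rpow_neg_half (a b : ℝ) :
    ∫ x in a..b, (b - x) ^ (-(1 / 2) : ℝ) = 2 * (b - a) ^ (1 / 2 : ℝ) := by
  rw [integral_comp_sub_left (fun x => x ^ (-(1 / 2) : ℝ)) b, sub_self,
    integral_rpow (Or.inl (by norm_num))]
  norm_num
  ring

lemma intervalIntegrable_of_norm_le_rpow_neg_half {f : ℝ → ℝ} {a b B : ℝ} (hab : a ≤ b)
    (hf : Measurable f) (hfB : ∀ x ∈ Ioo a b, ‖f x‖ ≤ B * (b - x) ^ (-(1 / 2) : ℝ)) :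
    IntervalIntegrable f volume a b := by
  refine ((intervalIntegrable_sub_rpow_neg_half a b).const_mul B).mono_fun'
    hf.aestronglyMeasurable ?_
  rw [uIoc_of_le hab, ← Measure.restrict_congr_set Ioo_ae_eq_Ioc, Filter.EventuallyLE,
    ae_restrict_iff' measurableSet_Ioo]
  exact ae_of_all _ hfB

lemma integral_le_of_norm_le_rpow_neg_half {f : ℝ → ℝ} {a b B : ℝ} (hab : a ≤ b)
    (hf : Measurable f) (hfB : ∀ x ∈ Ioo a b, ‖f x‖ ≤ B * (b - x) ^ (-(1 / 2) : ℝ)) :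
    ∫ x in a..b, f x ≤ 2 * B * (b - a) ^ (1 / 2 : ℝ) :=
  calc ∫ x in a..b, f x ≤ ∫ x in a..b, B * (b - x) ^ (-(1 / 2) : ℝ) :=
        integral_mono_on_of_le_Ioo hab (intervalIntegrable_of_norm_le_rpow_neg_half hab hf hfB)
          ((intervalIntegrable_sub_rpow_neg_half a b).const_mul B)
          fun x hx => (Real.le_norm_self _).trans (hfB x hx)
    _ = 2 * B * (b - a) ^ (1 / 2 : ℝ) := by
        rw [intervalIntegral.integral_const_mul, integral_sub_rpow_neg_half]; ring

lemma integral_const_mul_pow (c : ℝ) (p : ℕ) (x y : ℝ) :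
    ∫ s in x..y, c * s ^ p = c * (y ^ (p + 1) - x ^ (p + 1)) / (p + 1) := by
  rw [intervalIntegral.integral_const_mul, integral_pow]; ring

section PowerWeight

variable {a : ℝ → ℝ} {m M x y : ℝ} (p : ℕ)

lemma le_integral_mul_pow (hcont : Continuous a) (ham : ∀ s, m ≤ a s) (hx : 0 ≤ x) (hxy : x ≤ y) :
    m * (y ^ (p + 1) - x ^ (p + 1)) / (p + 1) ≤ ∫ s in x..y, a s * s ^ p := by
  rw [← integral_const_mul_pow]
  exact integral_mono_on hxy ((continuous_const.mul (continuous_pow p)).intervalIntegrable x y)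
    ((hcont.mul (continuous_pow p)).intervalIntegrable x y)
    fun s hs => mul_le_mul_of_nonneg_right (ham s) (pow_nonneg (hx.trans hs.1) p)

lemma integral_mul_pow_le (hcont : Continuous a) (haM : ∀ s, a s ≤ M) (hx : 0 ≤ x) (hxy : x ≤ y) :
    ∫ s in x..y, a s * s ^ p ≤ M * (y ^ (p + 1) - x ^ (p + 1)) / (p + 1) := by
  rw [← integral_const_mul_pow]
  exact integral_mono_on hxy ((hcont.mul (continuous_pow p)).intervalIntegrable x y)
    ((continuous_const.mul (continuous_pow p)).intervalIntegrable x y)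
    fun s hs => mul_le_mul_of_nonneg_right (haM s) (pow_nonneg (hx.trans hs.1) p)

end PowerWeight

lemma pow_mul_sub_le_pow_succ_sub_pow_succ {t P : ℝ} (p : ℕ) (ht : 0 ≤ t) (htP : t ≤ P) :
    P ^ p * (P - t) ≤ P ^ (p + 1) - t ^ (p + 1) := by
  have := mul_le_mul_of_nonneg_left (pow_le_pow_left₀ ht htP p) ht
  rw [pow_succ, pow_succ]
  nlinarith

lemma rpow_neg_half_mul_sqrt_eq {m P : ℝ} (p : ℕ) (hm : 0 ≤ m) (hP : 0 < P) :
    (m * P ^ p / (p + 1)) ^ (-(1 / 2) : ℝ) * P ^ (1 / 2 : ℝ)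
      = (m / (p + 1)) ^ (-(1 / 2) : ℝ) * (P ^ (p + 1)) ^ (-(1 : ℝ) / 2 + 1 / ((p : ℝ) + 1)) := by
  have hk : (0 : ℝ) < p + 1 := by positivity
  rw [mul_div_right_comm, Real.mul_rpow (div_nonneg hm hk.le) (by positivity), mul_assoc]
  congr 1
  rw [← Real.rpow_natCast, ← Real.rpow_natCast, ← Real.rpow_mul hP.le, ← Real.rpow_mul hP.le,
    ← Real.rpow_add hP]
  congr 1
  push_cast
  field_simp
  ring

lemma rpow_le_of_le_pow {k M h Q e : ℝ} (hk : 0 < k) (hM : 0 < M) (hh : 0 < h) (he : e ≤ 0)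
    (hQ : k * h / M ≤ Q) : Q ^ e ≤ (k / M) ^ e * h ^ e := by
  rw [← Real.mul_rpow (by positivity) hh.le, div_mul_eq_mul_div]
  exact Real.rpow_le_rpow_of_nonpos (by positivity) hQ he

lemma rpow_mul_rpow_le_mul_one_div_sqrt {M h P : ℝ} (p : ℕ) (hM : 0 < M) (hh : 0 < h) (hP : 0 ≤ P)
    (hPh : (p + 1) * h / M ≤ P ^ (p + 1)) :
    ((p + 1) / M) ^ (1 / ((p : ℝ) + 1)) * h ^ (-(1 : ℝ) / 2 + 1 / ((p : ℝ) + 1))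
      ≤ P * (1 / √h) := by
  have hroot : ((p + 1) / M * h) ^ (1 / ((p : ℝ) + 1)) ≤ P :=
    calc _ ≤ (P ^ (p + 1)) ^ (1 / ((p : ℝ) + 1)) :=
          Real.rpow_le_rpow (by positivity) (by rwa [div_mul_eq_mul_div]) (by positivity)
      _ = P := by
          rw [one_div]; exact_mod_cast Real.pow_rpow_inv_natCast hP (Nat.succ_ne_zero p)
  rw [Real.mul_rpow (by positivity) hh.le] at hroot
  rw [Real.rpow_add hh, Real.sqrt_eq_rpow, one_div (h ^ _), ← Real.rpow_neg hh.le, neg_div]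
  calc _ = ((p + 1) / M) ^ (1 / ((p : ℝ) + 1)) * h ^ (1 / ((p : ℝ) + 1)) * h ^ (-(1 / 2) : ℝ) := by
        ring
    _ ≤ P * h ^ (-(1 / 2) : ℝ) := by gcongr

section Primitive

variable {p : ℕ} {a G : ℝ → ℝ} {m M : ℝ}

lemma sub_eq_integral_of_primitive (hcont : Continuous a)
    (hG : ∀ x, G x = ∫ s in (0 : ℝ)..x, a s * s ^ p) (x y : ℝ) :
    G y - G x = ∫ s in x..y, a s * s ^ p := by
  rw [hG, hG]
  exact integral_interval_sub_left ((hcont.mul (continuous_pow p)).intervalIntegrable _ _)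
    ((hcont.mul (continuous_pow p)).intervalIntegrable _ _)

lemma mul_sub_le_sub_of_primitive (hcont : Continuous a) (hm : 0 ≤ m) (ham : ∀ s, m ≤ a s)
    (hG : ∀ x, G x = ∫ s in (0 : ℝ)..x, a s * s ^ p) {x P : ℝ} (hx : 0 ≤ x) (hxP : x ≤ P) :
    m * P ^ p / (p + 1) * (P - x) ≤ G P - G x := by
  rw [sub_eq_integral_of_primitive hcont hG]
  refine le_trans ?_ (le_integral_mul_pow p hcont ham hx hxP)
  have := pow_mul_sub_le_pow_succ_sub_pow_succ p hx hxP
  rw [div_mul_eq_mul_div, mul_assoc]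
  gcongr

lemma norm_one_div_sqrt_sub_le (hcont : Continuous a) (hm : 0 < m) (ham : ∀ s, m ≤ a s)
    (hG : ∀ x, G x = ∫ s in (0 : ℝ)..x, a s * s ^ p) {P x : ℝ} (hx : x ∈ Ioo 0 P) :
    ‖1 / √(G P - G x)‖ ≤ (m * P ^ p / (p + 1)) ^ (-(1 / 2) : ℝ) * (P - x) ^ (-(1 / 2) : ℝ) := by
  have hlow := mul_sub_le_sub_of_primitive hcont hm.le ham hG hx.1.le hx.2.le
  have hc : 0 < m * P ^ p / (p + 1) := by
    have := hx.1.trans hx.2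
    positivity
  have hpos : 0 < m * P ^ p / (p + 1) * (P - x) := mul_pos hc (sub_pos.2 hx.2)
  rw [Real.norm_of_nonneg (one_div_nonneg.2 (Real.sqrt_nonneg _)), Real.sqrt_eq_rpow, one_div,
    ← Real.rpow_neg (hpos.le.trans hlow), ← Real.mul_rpow hc.le (sub_pos.2 hx.2).le]
  exact Real.rpow_le_rpow_of_nonpos hpos hlow (by norm_num)

lemma strictMonoOn_primitive (hcont : Continuous a) (hm : 0 < m) (ham : ∀ s, m ≤ a s)
    (hG : ∀ x, G x = ∫ s in (0 : ℝ)..x, a s * s ^ p) : StrictMonoOn G (Ici 0) :=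
  fun x hx y _ hxy => by
    have := mul_sub_le_sub_of_primitive hcont hm.le ham hG hx hxy.le
    have : 0 < y := lt_of_le_of_lt hx hxy
    have : 0 < m * y ^ p / (p + 1) * (y - x) := mul_pos (by positivity) (sub_pos.2 hxy)
    linarith

lemma mul_div_le_pow_of_primitive (hcont : Continuous a) (hM : 0 < M) (haM : ∀ s, a s ≤ M)
    (hG : ∀ x, G x = ∫ s in (0 : ℝ)..x, a s * s ^ p) {P : ℝ} (hP : 0 ≤ P) :
    (p + 1) * G P / M ≤ P ^ (p + 1) := by
  have := integral_mul_pow_le p hcont haM le_rfl hP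
  rw [← sub_eq_integral_of_primitive hcont hG, hG 0, integral_same, sub_zero,
    zero_pow (Nat.succ_ne_zero p), sub_zero, le_div_iff₀ (by positivity)] at this
  rw [div_le_iff₀ hM]
  linarith

theorem integral_one_div_sqrt_sub_primitive_bounds_right (hp : 1 ≤ p) (hcont : Continuous a)
    (hm : 0 < m) (ham : ∀ s, m ≤ a s) (haM : ∀ s, a s ≤ M)
    (hG : ∀ x, G x = ∫ s in (0 : ℝ)..x, a s * s ^ p) {P : ℝ} (hP : 0 < P) :
    IntervalIntegrable (fun x => 1 / √(G P - G x)) volume 0 P ∧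
    ((p + 1) / M) ^ (1 / ((p : ℝ) + 1)) * G P ^ (-(1 : ℝ) / 2 + 1 / ((p : ℝ) + 1))
      ≤ ∫ x in (0 : ℝ)..P, 1 / √(G P - G x) ∧
    ∫ x in (0 : ℝ)..P, 1 / √(G P - G x)
      ≤ 2 * (m / (p + 1)) ^ (-(1 / 2) : ℝ) * ((p + 1) / M) ^ (-(1 : ℝ) / 2 + 1 / ((p : ℝ) + 1))
        * G P ^ (-(1 : ℝ) / 2 + 1 / ((p : ℝ) + 1)) := by
  have hM : 0 < M := hm.trans_le ((ham 0).trans (haM 0))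
  have hG0 : G 0 = 0 := by simp [hG]
  have hGc : Continuous G := by
    rw [funext hG]
    exact continuous_primitive (fun u v => (hcont.mul (continuous_pow p)).intervalIntegrable u v) 0
  have hmeas : Measurable fun x => 1 / √(G P - G x) := by fun_prop
  have hbound := fun x (hx : x ∈ Ioo 0 P) => norm_one_div_sqrt_sub_le hcont hm ham hG hx
  have hint := intervalIntegrable_of_norm_le_rpow_neg_half hP.le hmeas hbound
  have hGlt := strictMonoOn_primitive hcont hm ham hG
  have hGP : 0 < G P := hG0 ▸ hGlt self_mem_Ici hP.le hP
  have hPh := mul_div_le_pow_of_primitive hcont hM haM hG hP.le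
  have hE : -(1 : ℝ) / 2 + 1 / ((p : ℝ) + 1) ≤ 0 := by
    have : (1 : ℝ) ≤ p := by exact_mod_cast hp
    rw [neg_div, neg_add_nonpos_iff, div_le_div_iff₀ (by positivity) two_pos]
    linarith
  refine ⟨hint, ?_, ?_⟩
  · calc _ ≤ P * (1 / √(G P)) := rpow_mul_rpow_le_mul_one_div_sqrt p hM hGP hP.le hPh
      _ = ∫ x in (0 : ℝ)..P, 1 / √(G P) := by simp
      _ ≤ _ := integral_mono_on_of_le_Ioo hP.le intervalIntegrable_const hint fun x hx => by
          have hGx : 0 < G x := hG0 ▸ hGlt self_mem_Ici hx.1.le hx.1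
          exact one_div_le_one_div_of_le (Real.sqrt_pos.2 (sub_pos.2 (hGlt hx.1.le hP.le hx.2)))
            (Real.sqrt_le_sqrt (by linarith))
  · calc _ ≤ 2 * (m * P ^ p / (p + 1)) ^ (-(1 / 2) : ℝ) * (P - 0) ^ (1 / 2 : ℝ) :=
          integral_le_of_norm_le_rpow_neg_half hP.le hmeas hbound
      _ = 2 * (m / (p + 1)) ^ (-(1 / 2) : ℝ)
            * (P ^ (p + 1)) ^ (-(1 : ℝ) / 2 + 1 / ((p : ℝ) + 1)) := by
          rw [sub_zero, mul_assoc, rpow_neg_half_mul_sqrt_eq p hm.le hP, mul_assoc]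
      _ ≤ _ := by
          rw [mul_assoc _ ((((p : ℝ) + 1) / M) ^ _)]
          gcongr
          exact rpow_le_of_le_pow (by positivity) hM hGP hE hPh

lemma primitive_neg (hp : Odd p) (hG : ∀ x, G x = ∫ s in (0 : ℝ)..x, a s * s ^ p) (x : ℝ) :
    G (-x) = ∫ s in (0 : ℝ)..x, a (-s) * s ^ p := by
  have hodd : ∀ s : ℝ, a (-s) * s ^ p = -(a (-s) * (-s) ^ p) := fun s => by
    rw [hp.neg_pow]; ring
  simp_rw [hodd, intervalIntegral.integral_neg]
  rw [integral_comp_neg (fun s => a s * s ^ p), neg_zero, integral_symm, neg_neg, hG]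

theorem integral_one_div_sqrt_sub_primitive_bounds (hp : Odd p) (hcont : Continuous a)
    (hm : 0 < m) (ham : ∀ s, m ≤ a s) (haM : ∀ s, a s ≤ M)
    (hG : ∀ x, G x = ∫ s in (0 : ℝ)..x, a s * s ^ p) {xm xp h : ℝ} (hxm : xm < 0) (hxp : 0 < xp)
    (hGxm : G xm = h) (hGxp : G xp = h) :
    2 * ((p + 1) / M) ^ (1 / ((p : ℝ) + 1)) * h ^ (-(1 : ℝ) / 2 + 1 / ((p : ℝ) + 1))
      ≤ ∫ x in xm..xp, 1 / √(h - G x) ∧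
    ∫ x in xm..xp, 1 / √(h - G x)
      ≤ 4 * (m / (p + 1)) ^ (-(1 / 2) : ℝ) * ((p + 1) / M) ^ (-(1 : ℝ) / 2 + 1 / ((p : ℝ) + 1))
        * h ^ (-(1 : ℝ) / 2 + 1 / ((p : ℝ) + 1)) := by
  obtain ⟨hintR, hlowR, hupR⟩ :=
    integral_one_div_sqrt_sub_primitive_bounds_right hp.pos hcont hm ham haM hG hxp
  obtain ⟨hintL, hlowL, hupL⟩ :=
    integral_one_div_sqrt_sub_primitive_bounds_right hp.pos (hcont.comp continuous_neg) hm
      (fun s => ham (-s)) (fun s => haM (-s)) (primitive_neg hp hG) (neg_pos.2 hxm)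
  simp only [neg_neg, hGxm, hGxp] at hintR hlowR hupR hlowL hupL
  have hintL' : IntervalIntegrable (fun x => 1 / √(h - G x)) volume xm 0 := by
    simpa [hGxm] using ((IntervalIntegrable.iff_comp_neg).mp hintL).symm
  have hsplit : ∫ x in xm..xp, 1 / √(h - G x)
      = (∫ x in (0 : ℝ)..(-xm), 1 / √(h - G (-x))) + ∫ x in (0 : ℝ)..xp, 1 / √(h - G x) := by
    rw [← integral_add_adjacent_intervals hintL' hintR, integral_comp_neg (fun x => 1 / √(h - G x))]
    simp
  rw [hsplit]
  constructor <;> linarith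

end Primitive

theorem stmt_8_general (n : ℕ) (a : ℝ → ℝ) (hcont : Continuous a)
    (m M : ℝ) (hm : 0 < m)
    (hbound : ∀ s : ℝ, m ≤ a s ∧ a s ≤ M)
    (G : ℝ → ℝ) (hG : ∀ x : ℝ, G x = ∫ s in (0:ℝ)..x, a s * s ^ (2 * n + 1))
    (xp xm : ℝ → ℝ)
    (hxp : ∀ h : ℝ, 0 < h → 0 < xp h ∧ G (xp h) = h)
    (hxm : ∀ h : ℝ, 0 < h → xm h < 0 ∧ G (xm h) = h)
    (I' : ℝ → ℝ)
    (hI' : ∀ h : ℝ, 0 < h →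
      I' h = Real.sqrt 2 * ∫ x in (xm h)..(xp h), 1 / Real.sqrt (h - G x)) :
    ∃ c₁ > (0:ℝ), ∃ c₂ > (0:ℝ), ∃ h₀ > (0:ℝ), ∀ h : ℝ, h₀ ≤ h →
      c₁ * h ^ (-(1:ℝ) / 2 + 1 / (2 * n + 2)) ≤ I' h ∧
      I' h ≤ c₂ * h ^ (-(1:ℝ) / 2 + 1 / (2 * n + 2)) := by
  have hM : 0 < M := hm.trans_le ((hbound 0).1.trans (hbound 0).2)
  have hk : ((2 * n + 1 : ℕ) : ℝ) + 1 = 2 * n + 2 := by push_cast; ring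
  refine ⟨√2 * (2 * ((2 * n + 2) / M) ^ (1 / (2 * (n : ℝ) + 2))), by positivity,
    √2 * (4 * (m / (2 * n + 2)) ^ (-(1 / 2) : ℝ)
      * ((2 * n + 2) / M) ^ (-(1 : ℝ) / 2 + 1 / (2 * (n : ℝ) + 2))), by positivity,
    1, one_pos, fun h h_ge_one => ?_⟩
  have hh : 0 < h := one_pos.trans_le h_ge_one
  obtain ⟨hxp0, hGxp⟩ := hxp h hh
  obtain ⟨hxm0, hGxm⟩ := hxm h hh
  obtain ⟨hlow, hup⟩ := integral_one_div_sqrt_sub_primitive_bounds (odd_two_mul_add_one n) hcont hm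
    (fun s => (hbound s).1) (fun s => (hbound s).2) hG hxm0 hxp0 hGxm hGxp
  rw [hk] at hlow hup
  rw [hI' h hh, mul_assoc √2, mul_assoc √2]
  exact ⟨mul_le_mul_of_nonneg_left hlow (Real.sqrt_nonneg 2),
    mul_le_mul_of_nonneg_left hup (Real.sqrt_nonneg 2)⟩

theorem stmt_8 (n : ℕ) (hn : 1 ≤ n) (a : ℝ → ℝ) (hcont : Continuous a)
    (m M : ℝ) (hm : 0 < m) (hmM : m ≤ M)
    (hbound : ∀ s : ℝ, m ≤ a s ∧ a s ≤ M)
    (G : ℝ → ℝ) (hG : ∀ x : ℝ, G x = ∫ s in (0:ℝ)..x, a s * s ^ (2 * n + 1))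
    (xp xm : ℝ → ℝ)
    (hxp : ∀ h : ℝ, 0 < h → 0 < xp h ∧ G (xp h) = h)
    (hxm : ∀ h : ℝ, 0 < h → xm h < 0 ∧ G (xm h) = h)
    (I' : ℝ → ℝ)
    (hI' : ∀ h : ℝ, 0 < h →
      I' h = Real.sqrt 2 * ∫ x in (xm h)..(xp h), 1 / Real.sqrt (h - G x)) :
    ∃ c₁ > (0:ℝ), ∃ c₂ > (0:ℝ), ∃ h₀ > (0:ℝ), ∀ h : ℝ, h₀ ≤ h →
      c₁ * h ^ (-(1:ℝ) / 2 + 1 / (2 * n + 2)) ≤ I' h ∧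
      I' h ≤ c₂ * h ^ (-(1:ℝ) / 2 + 1 / (2 * n + 2)) :=
  stmt_8_general n a hcont m M hm hbound G hG xp xm hxp hxm I' hI'
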